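/- arXiv:2103.00630 — 2 statements merged into one kernel-verified Lean document; each statement's English description precedes it below -/
import Mathlib

section
/- Suppose the feasible set F₃ of the SDP relaxation P3 contains a pair (W₀, Σ₀) in which both W₀ and Σ₀ are positive definite (i.e. rank(W₀) = rank(Σ₀) = m), that I is a compact interval, and that h is continuous. Then every optimal solution of P3, i.e. every pair (W̃, Σ̃) ∈ F₃ with g₃(W̃, Σ̃) = inf {g₃(W, Σ) : (W, Σ) ∈ F₃}, satisfies rank(W̃) = 1. -/
/-!
Let `(W, Σ)` be optimal and `u = h θc`. The client constraint forces `uᴴ W u > 0`. The rank-one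
Nyström approximation `W' = W u (uᴴ W u)⁻¹ uᴴ W` satisfies `uᴴ W' u = uᴴ W u`, and `W - W'` is
positive semidefinite by Cauchy–Schwarz for the semi-inner product `xᴴ W y`. So `(W', Σ)` is
feasible: the client term is unchanged, while every adversary term and every diagonal entry can
only decrease. Optimality gives `Tr W ≤ Tr W'`, and a positive semidefinite matrix `W - W'` of
nonpositive trace vanishes; hence `W = W'` has rank one.
-/

open Matrix
open scoped ComplexOrder

/-- Outer-product channel matrix `H(θ) = h(θ) h(θ)ᴴ`. -/
noncomputable def Hm {m : ℕ} (h : ℝ → Fin m → ℂ) (θ : ℝ) : Matrix (Fin m) (Fin m) ℂ :=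
  vecMulVec (h θ) (star (h θ))

/-- Objective of P3 (and of the sampled problem P4): `Tr(W) + Tr(Σ)`. -/
noncomputable def g3 {m : ℕ}
    (p : Matrix (Fin m) (Fin m) ℂ × Matrix (Fin m) (Fin m) ℂ) : ℝ :=
  p.1.trace.re + p.2.trace.re

/-- Objective of P2 (and of P1): `‖w‖² + Tr(Σ)`. -/
noncomputable def g2 {m : ℕ} (p : (Fin m → ℂ) × Matrix (Fin m) (Fin m) ℂ) : ℝ :=
  (star p.1 ⬝ᵥ p.1).re + p.2.trace.re

/-- Feasible set of the SDP relaxation P3 (for a set `I` of adversary directions);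
with a finite sample set `Θ` in place of `I` it is the feasible set `F₄(Θ)` of P4. -/
def F3 {m : ℕ} (h : ℝ → Fin m → ℂ) (γc γa σ2 P θc : ℝ) (I : Set ℝ) :
    Set (Matrix (Fin m) (Fin m) ℂ × Matrix (Fin m) (Fin m) ℂ) :=
  {p | p.1.PosSemidef ∧ p.2.PosSemidef ∧
    γc * ((Hm h θc * p.2).trace.re + σ2) ≤ (Hm h θc * p.1).trace.re ∧
    (∀ θ ∈ I, (Hm h θ * p.1).trace.re ≤ γa * ((Hm h θ * p.2).trace.re + σ2)) ∧
    (∀ i, (p.1 i i).re + (p.2 i i).re ≤ P)}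

/-- Feasible set of problem P2 (for a set `I` of adversary directions);
with the union of all adversary intervals in place of `I` it is the feasible set of P1. -/
def F2 {m : ℕ} (h : ℝ → Fin m → ℂ) (γc γa σ2 P θc : ℝ) (I : Set ℝ) :
    Set ((Fin m → ℂ) × Matrix (Fin m) (Fin m) ℂ) :=
  {p | p.2.PosSemidef ∧
    γc * ((Hm h θc * p.2).trace.re + σ2) ≤ (star p.1 ⬝ᵥ (Hm h θc).mulVec p.1).re ∧
    (∀ θ ∈ I, (star p.1 ⬝ᵥ (Hm h θ).mulVec p.1).re ≤ γa * ((Hm h θ * p.2).trace.re + σ2)) ∧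
    (∀ i, Complex.normSq (p.1 i) + (p.2 i i).re ≤ P)}

namespace Matrix

variable {n 𝕜 : Type*} [RCLike 𝕜]

theorem PosSemidef.re_diag_le {A B : Matrix n n 𝕜} (hAB : (A - B).PosSemidef) (i : n) :
    RCLike.re (B i i) ≤ RCLike.re (A i i) := by
  have h := (RCLike.nonneg_iff.mp (hAB.diag_nonneg (i := i))).1
  rw [sub_apply, map_sub] at h
  linarith

variable [Fintype n]

theorem trace_vecMulVec_mul {R : Type*} [CommSemiring R] (u v : n → R) (A : Matrix n n R) :
    (vecMulVec u v * A).trace = v ⬝ᵥ A *ᵥ u := by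
  rw [vecMulVec_mul, trace_vecMulVec, dotProduct_comm, dotProduct_mulVec]

theorem rank_pos_of_ne_zero {m K : Type*} [Field K] {A : Matrix m n K} (hA : A ≠ 0) :
    0 < A.rank := by
  refine Nat.pos_of_ne_zero fun h => hA ?_
  rw [rank, Submodule.finrank_eq_zero, LinearMap.range_eq_bot] at h
  classical
  exact toLin'.map_eq_zero_iff.mp (by rwa [toLin'_apply'])

namespace PosSemidef

variable {A B : Matrix n n 𝕜}

theorem norm_dotProduct_mulVec_sq_le (hA : A.PosSemidef) (x y : n → 𝕜) :
    ‖star x ⬝ᵥ A *ᵥ y‖ ^ 2 ≤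
      RCLike.re (star x ⬝ᵥ A *ᵥ x) * RCLike.re (star y ⬝ᵥ A *ᵥ y) := by
  let _ := A.toSeminormedAddCommGroup hA
  let _ := A.toInnerProductSpace hA
  have h := inner_mul_inner_self_le (𝕜 := 𝕜) x y
  have e (a b : n → 𝕜) : inner 𝕜 a b = star a ⬝ᵥ A *ᵥ b := dotProduct_comm _ _
  rwa [norm_inner_symm y x, ← sq, e, e, e] at h

theorem dotProduct_mulVec_eq_re (hA : A.PosSemidef) (x : n → 𝕜) :
    star x ⬝ᵥ A *ᵥ x = (RCLike.re (star x ⬝ᵥ A *ᵥ x) : 𝕜) :=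
  RCLike.ext (by simp) (by simp [(RCLike.nonneg_iff.mp (hA.dotProduct_mulVec_nonneg x)).2])

theorem re_dotProduct_mulVec_le (hAB : (A - B).PosSemidef) (x : n → 𝕜) :
    RCLike.re (star x ⬝ᵥ B *ᵥ x) ≤ RCLike.re (star x ⬝ᵥ A *ᵥ x) := by
  have h := hAB.re_dotProduct_nonneg x
  rw [sub_mulVec, dotProduct_sub, map_sub] at h
  linarith

theorem eq_of_re_trace_le (hAB : (A - B).PosSemidef)
    (h : RCLike.re A.trace ≤ RCLike.re B.trace) : A = B := by
  obtain ⟨hre, him⟩ := RCLike.nonneg_iff.mp hAB.trace_nonneg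
  refine sub_eq_zero.mp (hAB.trace_eq_zero_iff.mp (RCLike.ext ?_ ?_))
  · rw [trace_sub, map_sub] at hre ⊢
    simp only [map_zero]
    linarith
  · simpa using him

end PosSemidef

-- Equal to `0` when `uᴴ A u = 0`, as `0⁻¹ = 0`.
noncomputable def nystrom (A : Matrix n n 𝕜) (u : n → 𝕜) : Matrix n n 𝕜 :=
  (RCLike.re (star u ⬝ᵥ A *ᵥ u))⁻¹ • vecMulVec (A *ᵥ u) (star (A *ᵥ u))

variable {A : Matrix n n 𝕜}

theorem rank_nystrom_le (A : Matrix n n 𝕜) (u : n → 𝕜) : (nystrom A u).rank ≤ 1 := by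
  rw [nystrom, ← smul_vecMulVec]
  exact rank_vecMulVec_le _ _

theorem dotProduct_nystrom_mulVec (A : Matrix n n 𝕜) (u x : n → 𝕜) :
    star x ⬝ᵥ nystrom A u *ᵥ x =
      ((RCLike.re (star u ⬝ᵥ A *ᵥ u))⁻¹ * ‖star x ⬝ᵥ A *ᵥ u‖ ^ 2 : ℝ) := by
  rw [nystrom, smul_mulVec, dotProduct_smul, dotProduct_mulVec (star x), vecMul_vecMulVec,
    smul_dotProduct, star_dotProduct (v := A *ᵥ u), smul_eq_mul, RCLike.star_def,
    RCLike.mul_conj, RCLike.real_smul_eq_coe_mul]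
  norm_cast

theorem posSemidef_nystrom (hA : A.PosSemidef) (u : n → 𝕜) : (nystrom A u).PosSemidef :=
  (posSemidef_vecMulVec_self_star _).smul (inv_nonneg.mpr (hA.re_dotProduct_nonneg u))

theorem posSemidef_sub_nystrom (hA : A.PosSemidef) (u : n → 𝕜) :
    (A - nystrom A u).PosSemidef := by
  refine .of_dotProduct_mulVec_nonneg (hA.1.sub (posSemidef_nystrom hA u).1) fun x => ?_
  rw [sub_mulVec, dotProduct_sub, dotProduct_nystrom_mulVec, hA.dotProduct_mulVec_eq_re,
    ← RCLike.ofReal_sub, RCLike.ofReal_nonneg, sub_nonneg]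
  rcases (hA.re_dotProduct_nonneg u).eq_or_lt with hzero | hpos
  · simpa [← hzero] using hA.re_dotProduct_nonneg x
  · rw [inv_mul_le_iff₀ hpos, mul_comm]
    exact hA.norm_dotProduct_mulVec_sq_le x u

theorem re_dotProduct_nystrom_mulVec_self (hA : A.PosSemidef) (u : n → 𝕜) :
    RCLike.re (star u ⬝ᵥ nystrom A u *ᵥ u) = RCLike.re (star u ⬝ᵥ A *ᵥ u) := by
  rw [dotProduct_nystrom_mulVec, RCLike.ofReal_re, RCLike.norm_sq_eq_def,
    (RCLike.nonneg_iff.mp (hA.dotProduct_mulVec_nonneg u)).2, mul_zero, add_zero, ← mul_assoc,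
    inv_mul_mul_self]

end Matrix

theorem trace_Hm_mul {m : ℕ} (h : ℝ → Fin m → ℂ) (θ : ℝ) (A : Matrix (Fin m) (Fin m) ℂ) :
    (Hm h θ * A).trace = star (h θ) ⬝ᵥ A *ᵥ h θ :=
  trace_vecMulVec_mul _ _ _

section P3

variable {m : ℕ} {h : ℝ → Fin m → ℂ} {γc γa σ2 P θc : ℝ} {I : Set ℝ}

theorem mem_F3_of_sub_posSemidef {W W' S : Matrix (Fin m) (Fin m) ℂ}
    (hmem : (W, S) ∈ F3 h γc γa σ2 P θc I) (hW' : W'.PosSemidef) (hsub : (W - W').PosSemidef)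
    (hclient : (Hm h θc * W).trace.re ≤ (Hm h θc * W').trace.re) :
    (W', S) ∈ F3 h γc γa σ2 P θc I := by
  obtain ⟨-, hS, hc, ha, hd⟩ := hmem
  refine ⟨hW', hS, hc.trans hclient, fun θ hθ => ?_, fun i => ?_⟩
  · have hle := hsub.re_dotProduct_mulVec_le (h θ)
    have hθ' := ha θ hθ
    simp only [trace_Hm_mul, RCLike.re_to_complex] at hle hθ' ⊢
    linarith
  · have hle := hsub.re_diag_le i
    simp only [RCLike.re_to_complex] at hle
    linarith [hd i]

theorem g3_le_of_mem_F3 {p q : Matrix (Fin m) (Fin m) ℂ × Matrix (Fin m) (Fin m) ℂ}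
    (hopt : g3 p = sInf (g3 '' F3 h γc γa σ2 P θc I)) (hq : q ∈ F3 h γc γa σ2 P θc I) :
    g3 p ≤ g3 q := by
  have hbdd : BddBelow (g3 '' F3 h γc γa σ2 P θc I) := by
    refine ⟨0, ?_⟩
    rintro _ ⟨⟨W, S⟩, ⟨hW, hS, -⟩, rfl⟩
    exact add_nonneg (RCLike.nonneg_iff.mp hW.trace_nonneg).1
      (RCLike.nonneg_iff.mp hS.trace_nonneg).1
  exact hopt ▸ csInf_le hbdd ⟨q, hq, rfl⟩

end P3

theorem stmt0_general {m : ℕ} (h : ℝ → Fin m → ℂ)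
    (γc γa σ2 P θc : ℝ) (I : Set ℝ)
    (hγ : γa < γc) (hγa : 0 < γa) (hσ : 0 < σ2)
    (Wt St : Matrix (Fin m) (Fin m) ℂ)
    (hmem : (Wt, St) ∈ F3 h γc γa σ2 P θc I)
    (hopt : g3 (Wt, St) = sInf (g3 '' F3 h γc γa σ2 P θc I)) :
    Wt.rank = 1 := by
  have hW : Wt.PosSemidef := hmem.1
  set u := h θc
  have hpos : 0 < (star u ⬝ᵥ Wt *ᵥ u).re := by
    have hclient := hmem.2.2.1
    rw [trace_Hm_mul, trace_Hm_mul] at hclient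
    have hSu : 0 ≤ (star u ⬝ᵥ St *ᵥ u).re := hmem.2.1.re_dotProduct_nonneg u
    exact (mul_pos (hγa.trans hγ) (by linarith)).trans_le hclient
  have hfeas : (nystrom Wt u, St) ∈ F3 h γc γa σ2 P θc I :=
    mem_F3_of_sub_posSemidef hmem (posSemidef_nystrom hW u) (posSemidef_sub_nystrom hW u)
      (by rw [trace_Hm_mul, trace_Hm_mul]; exact (re_dotProduct_nystrom_mulVec_self hW u).ge)
  have heq : Wt = nystrom Wt u :=
    (posSemidef_sub_nystrom hW u).eq_of_re_trace_le (by
      have := g3_le_of_mem_F3 hopt hfeas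
      simp only [g3, RCLike.re_to_complex] at this ⊢
      linarith)
  have hne : Wt ≠ 0 := by
    rintro rfl
    simp at hpos
  exact le_antisymm (heq ▸ rank_nystrom_le Wt u) (rank_pos_of_ne_zero hne)

/-- If the feasible set of P3 contains a pair of positive definite
matrices, `I` is a compact interval, and `h` is continuous, then every optimal
solution `(W̃, Σ̃)` of P3 satisfies `rank W̃ = 1`. -/
theorem stmt0 {m : ℕ} (hm : 1 ≤ m) (h : ℝ → Fin m → ℂ)
    (γc γa σ2 P θc : ℝ) (I : Set ℝ)
    (hγ : γa < γc) (hγa : 0 < γa) (hσ : 0 < σ2) (hP : 0 < P)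
    (a b : ℝ) (hab : a ≤ b) (hI : I = Set.Icc a b)
    (hcont : Continuous h)
    (hfeas : ∃ p ∈ F3 h γc γa σ2 P θc I, p.1.PosDef ∧ p.2.PosDef)
    (Wt St : Matrix (Fin m) (Fin m) ℂ)
    (hmem : (Wt, St) ∈ F3 h γc γa σ2 P θc I)
    (hopt : g3 (Wt, St) = sInf (g3 '' F3 h γc γa σ2 P θc I)) :
    Wt.rank = 1 :=
  stmt0_general h γc γa σ2 P θc I hγ hγa hσ Wt St hmem hopt
end

section
/- Let A ∈ ℂ^{m×m} be Hermitian positive definite, u ∈ ℂ^m, and λ ≥ 0 a real number, and set Y := A − λ u uᴴ. If Y is positive semidefinite and W ∈ ℂ^{m×m} is Hermitian positive semidefinite with Y · W = 0 (matrix product equal to the zero matrix), then rank(W) ≤ 1. -/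
open Matrix
open scoped ComplexOrder

/-! `Y W = 0` puts the range of `W` inside the kernel of `Y`. Since `A` is invertible, any `x` with
`Y x = 0` satisfies `A x = λ (uᴴ x) u`, so `x = λ (uᴴ x) A⁻¹ u`: the kernel of the rank-one
perturbation `Y` of `A` lies on the line through `A⁻¹ u`. -/

namespace Matrix

variable {n o K : Type*} [Fintype n] [DecidableEq n] [Field K]

theorem mem_span_inv_mulVec_of_sub_vecMulVec_mulVec_eq_zero {A : Matrix n n K} (hA : IsUnit A)
    (u w : n → K) {x : n → K} (hx : (A - vecMulVec u w) *ᵥ x = 0) :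
    x ∈ K ∙ (A⁻¹ *ᵥ u) := by
  have hAx : A *ᵥ x = (w ⬝ᵥ x) • u := by
    rw [sub_mulVec, sub_eq_zero, vecMulVec_mulVec, op_smul_eq_smul] at hx
    exact hx
  have hx_eq : x = (w ⬝ᵥ x) • (A⁻¹ *ᵥ u) := by
    rw [← mulVec_smul, ← hAx, mulVec_mulVec,
      nonsing_inv_mul A ((isUnit_iff_isUnit_det A).mp hA), one_mulVec]
  rw [hx_eq]
  exact Submodule.smul_mem _ _ (Submodule.mem_span_singleton_self _)

theorem rank_le_one_of_sub_vecMulVec_mul_eq_zero [Fintype o] {A : Matrix n n K} (hA : IsUnit A)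
    (u w : n → K) {W : Matrix n o K} (hW : (A - vecMulVec u w) * W = 0) : W.rank ≤ 1 := by
  have hrange : LinearMap.range W.mulVecLin ≤ K ∙ (A⁻¹ *ᵥ u) := by
    rintro _ ⟨x, rfl⟩
    refine mem_span_inv_mulVec_of_sub_vecMulVec_mulVec_eq_zero hA u w ?_
    rw [mulVecLin_apply, mulVec_mulVec, hW, zero_mulVec]
  calc W.rank ≤ Module.finrank K (K ∙ (A⁻¹ *ᵥ u)) := Submodule.finrank_mono hrange
    _ ≤ 1 := by simpa using finrank_span_le_card ({A⁻¹ *ᵥ u} : Set (n → K))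

end Matrix

theorem stmt8_general {m : ℕ} (A : Matrix (Fin m) (Fin m) ℂ) (hA : A.PosDef)
    (u : Fin m → ℂ) (lam : ℝ)
    (Y : Matrix (Fin m) (Fin m) ℂ) (hY : Y = A - (lam : ℂ) • vecMulVec u (star u))
    (W : Matrix (Fin m) (Fin m) ℂ) (hYW : Y * W = 0) :
    W.rank ≤ 1 := by
  rw [hY, ← smul_vecMulVec] at hYW
  exact rank_le_one_of_sub_vecMulVec_mul_eq_zero hA.isUnit _ _ hYW

/-- For Hermitian positive definite `A`, `u ∈ ℂ^m`, `λ ≥ 0`,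
set `Y := A − λ u uᴴ`. If `Y` is PSD and `W` is Hermitian PSD with `Y W = 0`,
then `rank W ≤ 1`. -/
theorem stmt8 {m : ℕ} (hm : 1 ≤ m) (A : Matrix (Fin m) (Fin m) ℂ) (hA : A.PosDef)
    (u : Fin m → ℂ) (lam : ℝ) (hlam : 0 ≤ lam)
    (Y : Matrix (Fin m) (Fin m) ℂ) (hY : Y = A - (lam : ℂ) • vecMulVec u (star u))
    (hYpsd : Y.PosSemidef)
    (W : Matrix (Fin m) (Fin m) ℂ) (hW : W.PosSemidef) (hYW : Y * W = 0) :
    W.rank ≤ 1 :=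
  stmt8_general A hA u lam Y hY W hYW
end
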